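/- Adversarial estimation error bound for linear hypotheses with the supremum-based ρ-margin loss: Let ε≥0 and let D be a distribution over X×Y such that M_{Φ̃_ρ,H_lin} ≤ ε. Then for every h∈H_lin, R_{ℓ_γ}(h) − R*_{ℓ_γ,H_lin} ≤ ρ·(R_{Φ̃_ρ}(h) − R*_{Φ̃_ρ,H_lin} + ε)/min{B,ρ}. -/

import Mathlib

open MeasureTheory Set
open scoped ENNReal

noncomputable section

/-- Conditional `ℓ`-risk of `h` at `x` with conditional probability level `t`. -/
def condRiskT {X : Type*} (ℓ : (X → ℝ) → X → ℝ → ℝ) (h : X → ℝ) (x : X) (t : ℝ) : ℝ :=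
  t * ℓ h x 1 + (1 - t) * ℓ h x (-1)

/-- Conditional `ℓ`-risk of `h` at `x`. -/
def condRisk {X : Type*} (ℓ : (X → ℝ) → X → ℝ → ℝ) (η : X → ℝ) (h : X → ℝ) (x : X) : ℝ :=
  condRiskT ℓ h x (η x)

/-- Minimal conditional `ℓ`-risk over the hypothesis set `H` at `x`. -/
def condRiskStar {X : Type*} (ℓ : (X → ℝ) → X → ℝ → ℝ) (η : X → ℝ) (H : Set (X → ℝ))
    (x : X) : ℝ :=
  sInf ((fun h => condRisk ℓ η h x) '' H)

/-- `ΔC_{ℓ,H}(h,x)`. -/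
def deltaC {X : Type*} (ℓ : (X → ℝ) → X → ℝ → ℝ) (η : X → ℝ) (H : Set (X → ℝ))
    (h : X → ℝ) (x : X) : ℝ :=
  condRisk ℓ η h x - condRiskStar ℓ η H x

/-- `ΔC_{ℓ,H}(h,x,t)`. -/
def deltaCT {X : Type*} (ℓ : (X → ℝ) → X → ℝ → ℝ) (H : Set (X → ℝ))
    (h : X → ℝ) (x : X) (t : ℝ) : ℝ :=
  condRiskT ℓ h x t - sInf ((fun h' => condRiskT ℓ h' x t) '' H)

/-- Generalization error `R_ℓ(h)` with respect to the input-space set `XS`. -/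
def genErrS {X : Type*} [MeasurableSpace X] (μ : Measure X) (XS : Set X)
    (ℓ : (X → ℝ) → X → ℝ → ℝ) (η : X → ℝ) (h : X → ℝ) : ℝ :=
  ∫ x in XS, condRisk ℓ η h x ∂μ

/-- Best-in-class error `R*_{ℓ,H}`. -/
def bestErrS {X : Type*} [MeasurableSpace X] (μ : Measure X) (XS : Set X)
    (ℓ : (X → ℝ) → X → ℝ → ℝ) (η : X → ℝ) (H : Set (X → ℝ)) : ℝ :=
  sInf ((fun h => genErrS μ XS ℓ η h) '' H)

/-- Minimizability gap `M_{ℓ,H}`. -/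
def minGapS {X : Type*} [MeasurableSpace X] (μ : Measure X) (XS : Set X)
    (ℓ : (X → ℝ) → X → ℝ → ℝ) (η : X → ℝ) (H : Set (X → ℝ)) : ℝ :=
  bestErrS μ XS ℓ η H - ∫ x in XS, condRiskStar ℓ η H x ∂μ

/-- `ε`-truncation `⟨t⟩_ε = t · 1_{t > ε}`. -/
def trunc (ε t : ℝ) : ℝ := if ε < t then t else 0

/-- `u_h(x) = inf_{‖x−x'‖ ≤ γ} h(x')`. -/
def uInf {E : Type*} [NormedAddCommGroup E] (γ : ℝ) (h : E → ℝ) (x : E) : ℝ :=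
  sInf (h '' {x' | ‖x - x'‖ ≤ γ})

/-- `o_h(x) = sup_{‖x−x'‖ ≤ γ} h(x')`. -/
def oSup {E : Type*} [NormedAddCommGroup E] (γ : ℝ) (h : E → ℝ) (x : E) : ℝ :=
  sSup (h '' {x' | ‖x - x'‖ ≤ γ})

/-- The adversarial zero-one loss `ℓ_γ(h,x,y) = sup_{‖x−x'‖ ≤ γ} 1_{y·h(x') ≤ 0}`. -/
def lossGamma {E : Type*} [NormedAddCommGroup E] (γ : ℝ) (h : E → ℝ) (x : E) (y : ℝ) : ℝ :=
  sSup ((fun x' => if y * h x' ≤ 0 then (1:ℝ) else 0) '' {x' | ‖x - x'‖ ≤ γ})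

/-- The supremum-based loss `Φ̃(h,x,y) = sup_{‖x−x'‖ ≤ γ} Φ(y·h(x'))`. -/
def supLoss {E : Type*} [NormedAddCommGroup E] (γ : ℝ) (Φ : ℝ → ℝ)
    (h : E → ℝ) (x : E) (y : ℝ) : ℝ :=
  sSup ((fun x' => Φ (y * h x')) '' {x' | ‖x - x'‖ ≤ γ})

/-- `H̄_γ(x) = {h ∈ H : u_h(x) ≤ 0 ≤ o_h(x)}`. -/
def Hbar {E : Type*} [NormedAddCommGroup E] (γ : ℝ) (H : Set (E → ℝ)) (x : E) :
    Set (E → ℝ) :=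
  {h ∈ H | uInf γ h x ≤ 0 ∧ 0 ≤ oSup γ h x}

/-- A hypothesis set is symmetric when it is closed under negation. -/
def IsSymmetricHyp {E : Type*} (H : Set (E → ℝ)) : Prop :=
  ∀ h : E → ℝ, h ∈ H ↔ (fun x => -(h x)) ∈ H

end

noncomputable section

/-- The linear hypothesis set `H_lin = {x ↦ w·x + b : ‖w‖_q ≤ W, |b| ≤ B}`. -/
def linHyp (d : ℕ) (p q : ℝ≥0∞) [Fact (1 ≤ q)] (W B : ℝ) :
    Set (PiLp p (fun _ : Fin d => ℝ) → ℝ) :=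
  {h | ∃ (w : PiLp q (fun _ : Fin d => ℝ)) (b : ℝ), ‖w‖ ≤ W ∧ |b| ≤ B ∧
    h = fun x => (∑ i, w i * x i) + b}

/-- The `ρ`-margin loss `Φ_ρ(t) = min{1, max{0, 1 − t/ρ}}`. -/
def rhoMargin (ρ : ℝ) (t : ℝ) : ℝ := min 1 (max 0 (1 - t / ρ))

end


section AuxLemmas
set_option linter.unusedSectionVars false
set_option linter.unusedVariables false

section AuxRho

lemma rhoMargin_nonneg (ρ t : ℝ) : 0 ≤ rhoMargin ρ t :=
  le_min zero_le_one (le_max_left 0 _)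

lemma rhoMargin_le_one (ρ t : ℝ) : rhoMargin ρ t ≤ 1 := min_le_left _ _

lemma rhoMargin_of_nonpos {ρ t : ℝ} (hρ : 0 < ρ) (ht : t ≤ 0) : rhoMargin ρ t = 1 := by
  have h0 : t / ρ ≤ 0 := div_nonpos_of_nonpos_of_nonneg ht hρ.le
  have h1 : (1:ℝ) ≤ 1 - t / ρ := by linarith
  unfold rhoMargin
  rw [max_eq_right (by linarith), min_eq_left h1]

lemma rhoMargin_eq_beta {ρ B : ℝ} (hρ : 0 < ρ) (hB : 0 ≤ B) :
    rhoMargin ρ B = 1 - min B ρ / ρ := by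
  unfold rhoMargin
  rcases le_total B ρ with hle | hle
  · rw [min_eq_left hle]
    have h1 : 0 ≤ 1 - B / ρ := by
      have := (div_le_one hρ).2 hle
      linarith
    have h2 : 1 - B / ρ ≤ 1 := by
      have : 0 ≤ B / ρ := div_nonneg hB hρ.le
      linarith
    rw [max_eq_right h1, min_eq_right h2]
  · rw [min_eq_right hle]
    have h1 : 1 - B / ρ ≤ 0 := by
      have := (one_le_div hρ).2 hle
      linarith
    rw [max_eq_left h1, div_self hρ.ne', min_eq_right (by norm_num)]
    norm_num

end AuxRho

section AuxSup

variable {E : Type*} [NormedAddCommGroup E]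

lemma aux_mem_ball {γ : ℝ} (hγ : 0 ≤ γ) (x : E) : x ∈ {x' : E | ‖x - x'‖ ≤ γ} := by
  simp [hγ]

lemma aux_sSup_image_le {S : Set E} (hS : S.Nonempty) {f : E → ℝ} {c : ℝ}
    (hf : ∀ z ∈ S, f z ≤ c) : sSup (f '' S) ≤ c :=
  csSup_le (hS.image f) (by rintro _ ⟨z, hz, rfl⟩; exact hf z hz)

lemma aux_le_sSup_image {S : Set E} {f : E → ℝ} {c : ℝ}
    (hf : ∀ z ∈ S, f z ≤ c) {z : E} (hz : z ∈ S) : f z ≤ sSup (f '' S) :=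
  le_csSup ⟨c, by rintro _ ⟨w, hw, rfl⟩; exact hf w hw⟩ (mem_image_of_mem f hz)

lemma aux_sSup_image_const {S : Set E} (hS : S.Nonempty) {f : E → ℝ} {c : ℝ}
    (hf : ∀ z ∈ S, f z = c) : sSup (f '' S) = c := by
  refine le_antisymm (aux_sSup_image_le hS fun z hz => (hf z hz).le) ?_
  obtain ⟨z, hz⟩ := hS
  calc c = f z := (hf z hz).symm
  _ ≤ _ := aux_le_sSup_image (fun w hw => (hf w hw).le) hz

/-- `supLoss` with the ρ-margin loss is in `[0,1]`. -/
lemma supLoss_nonneg {γ ρ : ℝ} (hγ : 0 ≤ γ) (g : E → ℝ) (x : E) (y : ℝ) :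
    0 ≤ supLoss γ (rhoMargin ρ) g x y := by
  have := aux_le_sSup_image (S := {x' : E | ‖x - x'‖ ≤ γ})
    (f := fun x' => rhoMargin ρ (y * g x')) (c := 1)
    (fun z _ => rhoMargin_le_one ρ _) (aux_mem_ball hγ x)
  exact le_trans (rhoMargin_nonneg ρ _) this

lemma supLoss_le_one {γ ρ : ℝ} (hγ : 0 ≤ γ) (g : E → ℝ) (x : E) (y : ℝ) :
    supLoss γ (rhoMargin ρ) g x y ≤ 1 :=
  aux_sSup_image_le ⟨x, aux_mem_ball hγ x⟩ (fun z _ => rhoMargin_le_one ρ _)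

lemma supLoss_neg_one (γ : ℝ) (Φ : ℝ → ℝ) (g : E → ℝ) (x : E) :
    supLoss γ Φ (fun z => -(g z)) x 1 = supLoss γ Φ g x (-1) := by
  unfold supLoss
  congr 1
  apply image_congr
  intro z _
  norm_num

lemma supLoss_neg_neg_one (γ : ℝ) (Φ : ℝ → ℝ) (g : E → ℝ) (x : E) :
    supLoss γ Φ (fun z => -(g z)) x (-1) = supLoss γ Φ g x 1 := by
  unfold supLoss
  congr 1
  apply image_congr
  intro z _
  norm_num

lemma supLoss_const {γ : ℝ} (hγ : 0 ≤ γ) (Φ : ℝ → ℝ) (c : ℝ) (x : E) (y : ℝ) :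
    supLoss γ Φ (fun _ => c) x y = Φ (y * c) :=
  aux_sSup_image_const ⟨x, aux_mem_ball hγ x⟩ (fun _ _ => rfl)

/-- Conditional risk of the adversarial 0-1 loss is at least `min η (1-η)`. -/
lemma condRisk_lossGamma_ge {γ : ℝ} (hγ : 0 ≤ γ) {η : E → ℝ} {x : E}
    (hη : η x ∈ Icc (0:ℝ) 1) (g : E → ℝ) :
    min (η x) (1 - η x) ≤ condRisk (lossGamma γ) η g x := by
  obtain ⟨ht0, ht1⟩ := hη
  set t := η x with htdef
  have hne : ({x' : E | ‖x - x'‖ ≤ γ}).Nonempty := ⟨x, aux_mem_ball hγ x⟩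
  have hbound : ∀ (y : ℝ), ∀ z ∈ {x' : E | ‖x - x'‖ ≤ γ},
      (if y * g z ≤ 0 then (1:ℝ) else 0) ≤ 1 := by
    intro y z _; split <;> norm_num
  have hLp0 : 0 ≤ lossGamma γ g x 1 := by
    refine le_trans ?_ (aux_le_sSup_image (hbound 1) (aux_mem_ball hγ x))
    split <;> norm_num
  have hLm0 : 0 ≤ lossGamma γ g x (-1) := by
    refine le_trans ?_ (aux_le_sSup_image (hbound (-1)) (aux_mem_ball hγ x))
    split <;> norm_num
  have hsum : 1 ≤ lossGamma γ g x 1 + lossGamma γ g x (-1) := by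
    by_cases hc : ∃ z ∈ {x' : E | ‖x - x'‖ ≤ γ}, g z ≤ 0
    · obtain ⟨z, hz, hgz⟩ := hc
      have h1 : (1:ℝ) ≤ lossGamma γ g x 1 := by
        have := aux_le_sSup_image (hbound 1) hz
        rwa [if_pos (by simpa using hgz)] at this
      linarith
    · push_neg at hc
      have h1 : (1:ℝ) ≤ lossGamma γ g x (-1) := by
        have := aux_le_sSup_image (hbound (-1)) (aux_mem_ball hγ x)
        rwa [if_pos (by simp; nlinarith [hc x (aux_mem_ball hγ x)])] at this
      linarith
  unfold condRisk condRiskT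
  rcases le_total t (1 - t) with hm | hm
  · rw [min_eq_left hm]
    nlinarith
  · rw [min_eq_right hm]
    nlinarith

end AuxSup

section PW
variable {E : Type*} [NormedAddCommGroup E]

/-- Pointwise H-consistency bound. -/
lemma pointwise_bound {γ ρ B : ℝ} (hγ : 0 ≤ γ) (hρ : 0 < ρ) (hB : 0 < B)
    {H : Set (E → ℝ)} {h : E → ℝ} (hh : h ∈ H)
    (hnegmem : (fun z => -(h z)) ∈ H)
    (hcB : (fun _ => B) ∈ H) (hcnB : (fun _ => -B) ∈ H)
    {η : E → ℝ} {x : E} (hη : η x ∈ Icc (0:ℝ) 1) :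
    (min B ρ / ρ) * (condRisk (lossGamma γ) η h x - min (η x) (1 - η x))
      ≤ condRisk (supLoss γ (rhoMargin ρ)) η h x
        - condRiskStar (supLoss γ (rhoMargin ρ)) η H x := by
  obtain ⟨ht0, ht1⟩ := hη
  set t := η x with htdef
  set β := min B ρ / ρ with hβdef
  have hβpos : 0 < β := div_pos (lt_min hB hρ) hρ
  have hβ1 : β ≤ 1 := by
    rw [hβdef, div_le_one hρ]; exact min_le_right _ _
  set Bl : Set E := {x' : E | ‖x - x'‖ ≤ γ} with hBl
  have hxB : x ∈ Bl := aux_mem_ball hγ x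
  have hne : Bl.Nonempty := ⟨x, hxB⟩
  -- condRiskStar facts
  have hbdd : BddBelow ((fun g => condRisk (supLoss γ (rhoMargin ρ)) η g x) '' H) := by
    refine ⟨0, ?_⟩
    rintro _ ⟨g, hg, rfl⟩
    dsimp only
    unfold condRisk condRiskT
    have := supLoss_nonneg (ρ := ρ) hγ g x 1
    have := supLoss_nonneg (ρ := ρ) hγ g x (-1)
    nlinarith
  have hstar_le : ∀ g ∈ H, condRiskStar (supLoss γ (rhoMargin ρ)) η H x
      ≤ condRisk (supLoss γ (rhoMargin ρ)) η g x := fun g hg =>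
    csInf_le hbdd ⟨g, hg, rfl⟩
  -- risk of constant hypotheses
  have hΦB : rhoMargin ρ B = 1 - β := rhoMargin_eq_beta hρ hB.le
  have hCB : condRisk (supLoss γ (rhoMargin ρ)) η (fun _ => B) x = 1 - t * β := by
    unfold condRisk condRiskT
    rw [supLoss_const hγ, supLoss_const hγ, one_mul, neg_one_mul,
      rhoMargin_of_nonpos hρ (by linarith : -B ≤ 0), hΦB]
    ring
  have hCnB : condRisk (supLoss γ (rhoMargin ρ)) η (fun _ => -B) x = 1 - (1 - t) * β := by
    unfold condRisk condRiskT
    rw [supLoss_const hγ, supLoss_const hγ, one_mul, neg_one_mul, neg_neg,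
      rhoMargin_of_nonpos hρ (by linarith : -B ≤ 0), hΦB]
    ring
  have hstarB := (hstar_le _ hcB).trans_eq hCB
  have hstarnB := (hstar_le _ hcnB).trans_eq hCnB
  set Cs := condRiskStar (supLoss γ (rhoMargin ρ)) η H x with hCs
  by_cases hpos : ∀ z ∈ Bl, 0 < h z
  · -- h > 0 on the ball
    have hLp : lossGamma γ h x 1 = 0 := by
      refine aux_sSup_image_const hne fun z hz => ?_
      rw [if_neg]
      rw [one_mul, not_le]
      exact hpos z hz
    have hLm : lossGamma γ h x (-1) = 1 := by
      refine aux_sSup_image_const hne fun z hz => ?_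
      rw [if_pos]
      nlinarith [hpos z hz]
    have hSm : supLoss γ (rhoMargin ρ) h x (-1) = 1 := by
      refine aux_sSup_image_const hne fun z hz => ?_
      exact rhoMargin_of_nonpos hρ (by nlinarith [hpos z hz])
    set S := supLoss γ (rhoMargin ρ) h x 1 with hS
    have hS0 : 0 ≤ S := supLoss_nonneg hγ h x 1
    have hS1 : S ≤ 1 := supLoss_le_one hγ h x 1
    have hCh : condRisk (supLoss γ (rhoMargin ρ)) η h x = t * S + (1 - t) := by
      unfold condRisk condRiskT; rw [hSm, ← hS]; ring
    have hCnh : condRisk (supLoss γ (rhoMargin ρ)) η (fun z => -(h z)) x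
        = t + (1 - t) * S := by
      unfold condRisk condRiskT
      rw [supLoss_neg_one, supLoss_neg_neg_one, hSm, ← hS]; ring
    have h1 : Cs ≤ t + (1 - t) * S := (hstar_le _ hnegmem).trans_eq hCnh
    have h3 : Cs ≤ t * S + (1 - t) := (hstar_le _ hh).trans_eq hCh
    rw [hCh]
    unfold condRisk condRiskT
    rw [hLp, hLm]
    rcases le_total t (1 - t) with hm | hm
    · rw [min_eq_left hm]
      by_cases hk : β ≤ 1 - S
      · have key : (1 - 2*t) * β ≤ (1 - 2*t) * (1 - S) :=
          mul_le_mul_of_nonneg_left hk (by linarith)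
        have key2 : (1 - 2*t) * (1 - S) = t * S + (1 - t) - (t + (1 - t) * S) := by ring
        linarith
      · push_neg at hk
        have key : t * (1 - S) ≤ t * β := mul_le_mul_of_nonneg_left hk.le ht0
        linarith [hstarnB]
    · rw [min_eq_right hm]
      linarith
  · by_cases hneg : ∀ z ∈ Bl, h z < 0
    · -- h < 0 on the ball
      have hLp : lossGamma γ h x 1 = 1 := by
        refine aux_sSup_image_const hne fun z hz => ?_
        rw [if_pos (by nlinarith [hneg z hz])]
      have hLm : lossGamma γ h x (-1) = 0 := by
        refine aux_sSup_image_const hne fun z hz => ?_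
        rw [if_neg (by nlinarith [hneg z hz])]
      have hSp : supLoss γ (rhoMargin ρ) h x 1 = 1 := by
        refine aux_sSup_image_const hne fun z hz => ?_
        exact rhoMargin_of_nonpos hρ (by nlinarith [hneg z hz])
      set S := supLoss γ (rhoMargin ρ) h x (-1) with hS
      have hS0 : 0 ≤ S := supLoss_nonneg hγ h x (-1)
      have hS1 : S ≤ 1 := supLoss_le_one hγ h x (-1)
      have hCh : condRisk (supLoss γ (rhoMargin ρ)) η h x = t + (1 - t) * S := by
        unfold condRisk condRiskT; rw [hSp, ← hS]; ring
      have hCnh : condRisk (supLoss γ (rhoMargin ρ)) η (fun z => -(h z)) x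
          = t * S + (1 - t) := by
        unfold condRisk condRiskT
        rw [supLoss_neg_one, supLoss_neg_neg_one, hSp, ← hS]; ring
      have h1 : Cs ≤ t * S + (1 - t) := (hstar_le _ hnegmem).trans_eq hCnh
      have h3 : Cs ≤ t + (1 - t) * S := (hstar_le _ hh).trans_eq hCh
      rw [hCh]
      unfold condRisk condRiskT
      rw [hLp, hLm]
      rcases le_total t (1 - t) with hm | hm
      · rw [min_eq_left hm]
        linarith
      · rw [min_eq_right hm]
        by_cases hk : β ≤ 1 - S
        · have key : (2*t - 1) * β ≤ (2*t - 1) * (1 - S) :=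
            mul_le_mul_of_nonneg_left hk (by linarith)
          have key2 : (2*t - 1) * (1 - S) = t + (1 - t) * S - (t * S + (1 - t)) := by ring
          linarith
        · push_neg at hk
          have key : (1 - t) * (1 - S) ≤ (1 - t) * β :=
            mul_le_mul_of_nonneg_left hk.le (by linarith)
          linarith [hstarB]
    · -- h takes both signs on the ball
      push_neg at hpos hneg
      obtain ⟨z1, hz1, hz1v⟩ := hpos
      obtain ⟨z2, hz2, hz2v⟩ := hneg
      have hbound : ∀ (y : ℝ), ∀ z ∈ Bl, (if y * h z ≤ 0 then (1:ℝ) else 0) ≤ 1 := by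
        intro y z _; split <;> norm_num
      have hLp : lossGamma γ h x 1 = 1 := by
        refine le_antisymm (aux_sSup_image_le hne (hbound 1)) ?_
        have := aux_le_sSup_image (hbound 1) hz1
        rwa [if_pos (by simpa using hz1v)] at this
      have hLm : lossGamma γ h x (-1) = 1 := by
        refine le_antisymm (aux_sSup_image_le hne (hbound (-1))) ?_
        have := aux_le_sSup_image (hbound (-1)) hz2
        rwa [if_pos (by simp; linarith)] at this
      have hSp : supLoss γ (rhoMargin ρ) h x 1 = 1 := by
        refine le_antisymm (supLoss_le_one hγ h x 1) ?_
        have := aux_le_sSup_image (f := fun x' => rhoMargin ρ (1 * h x')) (c := 1)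
          (fun z _ => rhoMargin_le_one ρ _) hz1
        rwa [rhoMargin_of_nonpos hρ (by linarith [hz1v] : 1 * h z1 ≤ 0)] at this
      have hSm : supLoss γ (rhoMargin ρ) h x (-1) = 1 := by
        refine le_antisymm (supLoss_le_one hγ h x (-1)) ?_
        have := aux_le_sSup_image (f := fun x' => rhoMargin ρ ((-1) * h x')) (c := 1)
          (fun z _ => rhoMargin_le_one ρ _) hz2
        rwa [rhoMargin_of_nonpos hρ (by nlinarith : (-1) * h z2 ≤ 0)] at this
      unfold condRisk condRiskT
      rw [hLp, hLm, hSp, hSm]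
      rcases le_total t (1 - t) with hm | hm
      · rw [min_eq_left hm]
        have key : (1 - t) * β ≤ 1 - Cs := by linarith [hstarnB]
        nlinarith
      · rw [min_eq_right hm]
        have key : t * β ≤ 1 - Cs := by linarith [hstarB]
        nlinarith

end PW

section LinHypAux

variable {d : ℕ} {p q : ℝ≥0∞} [Fact (1 ≤ q)] {W B : ℝ}

lemma linHyp_neg_mem {h : PiLp p (fun _ : Fin d => ℝ) → ℝ}
    (hh : h ∈ linHyp d p q W B) : (fun z => -(h z)) ∈ linHyp d p q W B := by
  obtain ⟨w, b, hw, hb, rfl⟩ := hh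
  refine ⟨-w, -b, ?_, ?_, ?_⟩
  · rwa [norm_neg]
  · rwa [abs_neg]
  · funext z
    have h2 : ∀ i, (-w) i * z i = -(w i * z i) := fun i => by
      show (-(w i)) * z i = _; ring
    simp only [h2, Finset.sum_neg_distrib]
    ring

lemma linHyp_const_mem (hW : 0 ≤ W) {c : ℝ} (hc : |c| ≤ B) :
    (fun _ : PiLp p (fun _ : Fin d => ℝ) => c) ∈ linHyp d p q W B := by
  refine ⟨0, c, ?_, hc, ?_⟩
  · rw [norm_zero]; exact hW
  · funext z
    have : ∀ i, (0 : PiLp q (fun _ : Fin d => ℝ)) i * z i = 0 := fun i => by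
      show (0:ℝ) * z i = 0; ring
    simp [this]

end LinHypAux


end AuxLemmas

open MeasureTheory Set in
/-- **Adversarial estimation error bound for linear hypotheses with the supremum-based
ρ-margin loss** (Corollary 3). -/
theorem adversarial_bound_linear_sup_rho_margin
    {d : ℕ} {p q : ℝ≥0∞} [Fact (1 ≤ p)] [Fact (1 ≤ q)] (hpq : 1/p + 1/q = 1)
    [MeasurableSpace (PiLp p (fun _ : Fin d => ℝ))]
    [BorelSpace (PiLp p (fun _ : Fin d => ℝ))]
    (γ : ℝ) (hγ : γ ∈ Ioo (0:ℝ) 1)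
    (W B ρ : ℝ) (hW : 0 < W) (hB : 0 < B) (hρ : 0 < ρ)
    (μ : Measure (PiLp p (fun _ : Fin d => ℝ))) [IsProbabilityMeasure μ]
    (hμXS : μ {x : PiLp p (fun _ : Fin d => ℝ) | ‖x‖ ≤ 1} = 1)
    (η : PiLp p (fun _ : Fin d => ℝ) → ℝ) (hηmeas : Measurable η)
    (hη01 : ∀ x, η x ∈ Icc (0:ℝ) 1)
    (hIntγ : ∀ g ∈ linHyp d p q W B,
      IntegrableOn (condRisk (lossGamma γ) η g) {x | ‖x‖ ≤ 1} μ)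
    (hIntΦ : ∀ g ∈ linHyp d p q W B,
      IntegrableOn (condRisk (supLoss γ (rhoMargin ρ)) η g) {x | ‖x‖ ≤ 1} μ)
    (hIntSΦ : IntegrableOn (condRiskStar (supLoss γ (rhoMargin ρ)) η (linHyp d p q W B))
      {x | ‖x‖ ≤ 1} μ)
    (ε : ℝ) (hε : 0 ≤ ε)
    (hgap : minGapS μ {x | ‖x‖ ≤ 1} (supLoss γ (rhoMargin ρ)) η (linHyp d p q W B) ≤ ε)
    (h : PiLp p (fun _ : Fin d => ℝ) → ℝ) (hh : h ∈ linHyp d p q W B) :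
    genErrS μ {x | ‖x‖ ≤ 1} (lossGamma γ) η h
        - bestErrS μ {x | ‖x‖ ≤ 1} (lossGamma γ) η (linHyp d p q W B)
      ≤ ρ * (genErrS μ {x | ‖x‖ ≤ 1} (supLoss γ (rhoMargin ρ)) η h
          - bestErrS μ {x | ‖x‖ ≤ 1} (supLoss γ (rhoMargin ρ)) η (linHyp d p q W B)
          + ε) / min B ρ := by
  set XS : Set (PiLp p (fun _ : Fin d => ℝ)) := {x | ‖x‖ ≤ 1} with hXSdef
  set Hl := linHyp d p q W B with hHl
  set β := min B ρ / ρ with hβdef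
  have hβpos : 0 < β := div_pos (lt_min hB hρ) hρ
  have hXSmeas : MeasurableSet XS :=
    (isClosed_le continuous_norm continuous_const).measurableSet
  set m₀ : (PiLp p (fun _ : Fin d => ℝ)) → ℝ := fun x => min (η x) (1 - η x) with hm₀def
  have hm₀int : IntegrableOn m₀ XS μ := by
    refine Integrable.mono' (integrable_const 1)
      ((hηmeas.min (measurable_const.sub hηmeas)).aestronglyMeasurable) ?_
    filter_upwards with x
    have hx := hη01 x
    have hlb : (-1:ℝ) ≤ m₀ x := le_min (by linarith [hx.1]) (by linarith [hx.2])
    have hub : m₀ x ≤ 1 := le_trans (min_le_left _ _) hx.2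
    rw [Real.norm_eq_abs, abs_le]
    exact ⟨hlb, hub⟩
  -- memberships
  have hnegmem := linHyp_neg_mem hh
  have hcB : (fun _ : PiLp p (fun _ : Fin d => ℝ) => B) ∈ Hl := linHyp_const_mem hW.le (by rw [abs_of_pos hB])
  have hcnB : (fun _ : PiLp p (fun _ : Fin d => ℝ) => -B) ∈ Hl := linHyp_const_mem hW.le (by rw [abs_neg, abs_of_pos hB])
  -- lower bound for the best-in-class adversarial error
  have hlow : ∀ g ∈ Hl, ∫ x in XS, m₀ x ∂μ ≤ genErrS μ XS (lossGamma γ) η g := by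
    intro g hg
    exact setIntegral_mono_on hm₀int (hIntγ g hg) hXSmeas
      (fun x _ => condRisk_lossGamma_ge hγ.1.le (hη01 x) g)
  have hbestγ : ∫ x in XS, m₀ x ∂μ ≤ bestErrS μ XS (lossGamma γ) η Hl :=
    le_csInf ⟨_, ⟨h, hh, rfl⟩⟩ (by rintro _ ⟨g, hg, rfl⟩; exact hlow g hg)
  -- main integrated inequality
  have hmono : ∫ x in XS, β * (condRisk (lossGamma γ) η h x - m₀ x) ∂μ
      ≤ ∫ x in XS, (condRisk (supLoss γ (rhoMargin ρ)) η h x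
          - condRiskStar (supLoss γ (rhoMargin ρ)) η Hl x) ∂μ := by
    refine setIntegral_mono_on (((hIntγ h hh).sub hm₀int).const_mul β)
      ((hIntΦ h hh).sub hIntSΦ) hXSmeas ?_
    intro x _
    exact pointwise_bound hγ.1.le hρ hB hh hnegmem hcB hcnB (hη01 x)
  rw [integral_const_mul, integral_sub (hIntγ h hh) hm₀int,
    integral_sub (hIntΦ h hh) hIntSΦ] at hmono
  have hgap' : bestErrS μ XS (supLoss γ (rhoMargin ρ)) η Hl - ε
      ≤ ∫ x in XS, condRiskStar (supLoss γ (rhoMargin ρ)) η Hl x ∂μ := by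
    unfold minGapS at hgap
    linarith
  have hchain : β * (genErrS μ XS (lossGamma γ) η h - bestErrS μ XS (lossGamma γ) η Hl)
      ≤ genErrS μ XS (supLoss γ (rhoMargin ρ)) η h
        - bestErrS μ XS (supLoss γ (rhoMargin ρ)) η Hl + ε := by
    have h1 : β * (genErrS μ XS (lossGamma γ) η h - bestErrS μ XS (lossGamma γ) η Hl)
        ≤ β * (genErrS μ XS (lossGamma γ) η h - ∫ x in XS, m₀ x ∂μ) :=
      mul_le_mul_of_nonneg_left (by linarith) hβpos.le
    have h2 : genErrS μ XS (lossGamma γ) η h = ∫ x in XS, condRisk (lossGamma γ) η h x ∂μ := rfl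
    have h3 : genErrS μ XS (supLoss γ (rhoMargin ρ)) η h
        = ∫ x in XS, condRisk (supLoss γ (rhoMargin ρ)) η h x ∂μ := rfl
    rw [h2] at h1 ⊢
    rw [h3]
    linarith [hmono, hgap']
  -- conclude by dividing by β
  have hL : genErrS μ XS (lossGamma γ) η h - bestErrS μ XS (lossGamma γ) η Hl
      ≤ (genErrS μ XS (supLoss γ (rhoMargin ρ)) η h
          - bestErrS μ XS (supLoss γ (rhoMargin ρ)) η Hl + ε) / β := by
    rw [le_div_iff₀ hβpos]
    linarith [hchain]
  refine hL.trans (le_of_eq ?_)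
  rw [hβdef, div_div_eq_mul_div]
  ring
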